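/- Let f be a permutation of G such that for every S ∈ {{e}, Z \ {e}} ∪ {Y_i : i ∈ F_q} and all g, h ∈ G one has hg⁻¹ ∈ S if and only if f(h)f(g)⁻¹ ∈ S. If f(e) = e and f(y₀) = y₀, where y₀ = g(1,0,0), then f is the identity permutation of G. -/
import Mathlib


/-- The Heisenberg group `H₃(F)` of upper unitriangular 3×3 matrices over `F`,
recorded by the three free entries: `x` in position (1,2), `y` in position (2,3),
`z` in position (1,3). -/
@[ext]
structure Heis (F : Type*) where
  x : F
  y : F
  z : F
deriving DecidableEq

namespace Heis

variable {F : Type*} [Field F]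

/-- Multiplication corresponding to the matrix product. -/
instance : Group (Heis F) where
  mul a b := ⟨a.x + b.x, a.y + b.y, a.z + b.z + a.x * b.y⟩
  one := ⟨0, 0, 0⟩
  inv a := ⟨-a.x, -a.y, -a.z + a.x * a.y⟩
  mul_assoc a b c := Heis.ext
    (show a.x + b.x + c.x = a.x + (b.x + c.x) by ring)
    (show a.y + b.y + c.y = a.y + (b.y + c.y) by ring)
    (show a.z + b.z + a.x * b.y + c.z + (a.x + b.x) * c.y
        = a.z + (b.z + c.z + b.x * c.y) + a.x * (b.y + c.y) by ring)
  one_mul a := Heis.ext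
    (show (0 : F) + a.x = a.x by ring)
    (show (0 : F) + a.y = a.y by ring)
    (show (0 : F) + a.z + 0 * a.y = a.z by ring)
  mul_one a := Heis.ext
    (show a.x + 0 = a.x by ring)
    (show a.y + 0 = a.y by ring)
    (show a.z + 0 + a.x * 0 = a.z by ring)
  inv_mul_cancel a := Heis.ext
    (show -a.x + a.x = 0 by ring)
    (show -a.y + a.y = 0 by ring)
    (show -a.z + a.x * a.y + a.z + -a.x * a.y = 0 by ring)

instance [Fintype F] : Fintype (Heis F) :=
  Fintype.ofEquiv (F × F × F)
    ⟨fun p => ⟨p.1, p.2.1, p.2.2⟩, fun a => (a.x, a.y, a.z), fun _ => rfl, fun _ => rfl⟩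

end Heis

/-- The element `g(x,y,z)` of the Heisenberg group. -/
def gElt {F : Type*} (x y z : F) : Heis F := ⟨x, y, z⟩

/-- The center `Z = {g(0,0,z) : z ∈ F}` of the Heisenberg group, as a set. -/
def Zset (F : Type*) [Field F] : Set (Heis F) := {g : Heis F | g.x = 0 ∧ g.y = 0}

/-- The center `Z` as a subgroup of the Heisenberg group. -/
def Zsub (F : Type*) [Field F] : Subgroup (Heis F) where
  carrier := Zset F
  mul_mem' := fun {a b} ha hb =>
    ⟨show a.x + b.x = 0 by rw [ha.1, hb.1, add_zero],
     show a.y + b.y = 0 by rw [ha.2, hb.2, add_zero]⟩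
  one_mem' := ⟨rfl, rfl⟩
  inv_mem' := fun {a} ha =>
    ⟨show -a.x = 0 by rw [ha.1, neg_zero],
     show -a.y = 0 by rw [ha.2, neg_zero]⟩

/-- `γ_i(α,β) = αβ/2 + (α² − εβ²)i`. -/
def gam {F : Type*} [Field F] (ε i α β : F) : F := α * β / 2 + (α ^ 2 - ε * β ^ 2) * i

/-- `Y_i = {g(α, β, γ_i(α,β)) : (α,β) ≠ (0,0)}`. -/
def Yset {F : Type*} [Field F] (ε i : F) : Set (Heis F) :=
  {g : Heis F | ∃ α β : F, (α, β) ≠ (0, 0) ∧ g = gElt α β (gam ε i α β)}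

/-- `X_i = Y_i ∪ {e}`. -/
def Xset {F : Type*} [Field F] (ε i : F) : Set (Heis F) := Yset ε i ∪ {1}

/-- The map `ρ(M) : G → G` attached to the matrix `M = [[α,β],[εβ,α]]`. -/
def rho {F : Type*} [Field F] (ε α β : F) : Heis F → Heis F := fun g =>
  gElt (α * g.x + ε * β * g.y) (β * g.x + α * g.y)
    (α * β * (g.x ^ 2 / 2 + ε * g.y ^ 2 / 2) + ε * β ^ 2 * g.x * g.y
      + (α ^ 2 - ε * β ^ 2) * g.z)

/-- `K = {ρ(M) : M = [[α,β],[εβ,α]], (α,β) ≠ (0,0)}`, as a set of maps `G → G`. -/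
def Kset {F : Type*} [Field F] (ε : F) : Set (Heis F → Heis F) :=
  {f | ∃ α β : F, (α, β) ≠ (0, 0) ∧ f = rho ε α β}

/-- The family of sets `{e}`, `Z \ {e}`, `Y_i` for `i ∈ F`. -/
def SFam {F : Type*} [Field F] (ε : F) : Set (Set (Heis F)) :=
  insert {1} (insert (Zset F \ {1}) {S | ∃ i : F, S = Yset ε i})

/-- `f` preserves each of the basic sets `{e}`, `Z \ {e}`, `Y_i`:
`hg⁻¹ ∈ S ↔ f(h)f(g)⁻¹ ∈ S`. -/
def Preserves {F : Type*} [Field F] (ε : F) (f : Heis F → Heis F) : Prop :=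
  ∀ S ∈ SFam ε, ∀ g h : Heis F, h * g⁻¹ ∈ S ↔ f h * (f g)⁻¹ ∈ S

/-- The set of permutations of `G` of the form `x ↦ σ(x)·c` with `σ ∈ K`, `c ∈ G`. -/
def Aset {F : Type*} [Field F] (ε : F) : Set (Equiv.Perm (Heis F)) :=
  {f | ∃ σ ∈ Kset ε, ∃ c : Heis F, ∀ x : Heis F, f x = σ x * c}

/-- The operation `ψ` on `F ∪ {∞}`, with `∞` encoded as `none`. -/
def psi {F : Type*} [Field F] [DecidableEq F] (ε : F) : Option F → Option F → Option F
  | none, j => j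
  | some i, none => some i
  | some i, some j => if i + j = 0 then none else some ((i * j + ε / 16) / (i + j))

/-- `Y_k` for `k ∈ F ∪ {∞}`, where `Y_∞ = Z \ {e}`. -/
def YInf {F : Type*} [Field F] (ε : F) : Option F → Set (Heis F)
  | some i => Yset ε i
  | none => Zset F \ {1}


namespace S9Aux

set_option linter.unusedSectionVars false

variable {F : Type*} [Field F]

lemma gx (p q r : F) : (gElt p q r).x = p := rfl
lemma gy (p q r : F) : (gElt p q r).y = q := rfl
lemma gz (p q r : F) : (gElt p q r).z = r := rfl

lemma mulx (a b : Heis F) : (a * b).x = a.x + b.x := rfl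
lemma muly (a b : Heis F) : (a * b).y = a.y + b.y := rfl
lemma mulz (a b : Heis F) : (a * b).z = a.z + b.z + a.x * b.y := rfl
lemma invx (a : Heis F) : (a⁻¹).x = -a.x := rfl
lemma invy (a : Heis F) : (a⁻¹).y = -a.y := rfl
lemma invz (a : Heis F) : (a⁻¹).z = -a.z + a.x * a.y := rfl
lemma one_def : (1 : Heis F) = gElt 0 0 0 := rfl

lemma div_comp (x g : Heis F) :
    x * g⁻¹ = gElt (x.x - g.x) (x.y - g.y) (x.z - g.z + g.x * g.y - x.x * g.y) := by
  refine Heis.ext ?_ ?_ ?_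
  · show x.x + -g.x = x.x - g.x; ring
  · show x.y + -g.y = x.y - g.y; ring
  · show x.z + (-g.z + g.x * g.y) + x.x * -g.y = x.z - g.z + g.x * g.y - x.x * g.y; ring

lemma mem_Yset_iff {e i : F} {a : Heis F} :
    a ∈ Yset e i ↔ ¬(a.x = 0 ∧ a.y = 0) ∧ a.z = gam e i a.x a.y := by
  constructor
  · rintro ⟨p, q, hne, rfl⟩
    refine ⟨fun h => hne ?_, rfl⟩
    have h1 : p = 0 := h.1
    have h2 : q = 0 := h.2
    rw [h1, h2]
  · rintro ⟨hne, hz⟩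
    exact ⟨a.x, a.y, fun h => hne ⟨congrArg Prod.fst h, congrArg Prod.snd h⟩,
      Heis.ext rfl rfl hz⟩

lemma mem_Zdiff_iff {a : Heis F} :
    a ∈ Zset F \ {1} ↔ (a.x = 0 ∧ a.y = 0) ∧ a.z ≠ 0 := by
  constructor
  · rintro ⟨⟨h1, h2⟩, h3⟩
    refine ⟨⟨h1, h2⟩, fun hz => h3 ?_⟩
    show a = 1
    exact Heis.ext h1 h2 hz
  · rintro ⟨⟨h1, h2⟩, h3⟩
    exact ⟨⟨h1, h2⟩, fun h => h3 (congrArg Heis.z h)⟩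

lemma N_ne_zero {e : F} (he : ¬IsSquare e) {p q : F} (h : ¬(p = 0 ∧ q = 0)) :
    p ^ 2 - e * q ^ 2 ≠ 0 := by
  intro h0
  by_cases hq : q = 0
  · refine h ⟨?_, hq⟩
    have hp2 : p ^ 2 = 0 := by rw [hq] at h0; linear_combination h0
    exact pow_eq_zero_iff (two_ne_zero) |>.mp hp2
  · exact he ⟨p / q, by field_simp; linear_combination -h0⟩

lemma two_ne_zero'' [Fintype F] (hodd : Odd (Fintype.card F)) : (2 : F) ≠ 0 := by
  intro h
  have hd : (ringChar F : ℕ) ∣ 2 := by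
    have := (CharP.cast_eq_zero_iff F (ringChar F) 2).mp (by exact_mod_cast h)
    exact this
  have h12 : ringChar F = 1 ∨ ringChar F = 2 := (Nat.dvd_prime Nat.prime_two).mp hd
  have hne1 : ringChar F ≠ 1 := CharP.ringChar_ne_one
  have h2 : ringChar F = 2 := h12.resolve_left hne1
  have := FiniteField.even_card_of_char_two h2
  rw [Nat.odd_iff] at hodd
  omega
  
end S9Aux

/-- Let `f` be a permutation of `G` preserving every set
`S ∈ {{e}, Z \ {e}} ∪ {Y_i : i ∈ F_q}` in the sense that `hg⁻¹ ∈ S ↔ f(h)f(g)⁻¹ ∈ S`.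
If `f(e) = e` and `f(y₀) = y₀`, where `y₀ = g(1,0,0)`, then `f` is the identity. -/
theorem statement_9 {F : Type*} [Field F] [Fintype F]
    (hodd : Odd (Fintype.card F)) (ε : F) (hε : ¬IsSquare ε)
    (f : Equiv.Perm (Heis F)) (hf : Preserves ε ⇑f)
    (h1 : f 1 = 1) (hy0 : f (gElt 1 0 0) = gElt 1 0 0) :
    ∀ x : Heis F, f x = x := by
  classical
  have h2 : (2 : F) ≠ 0 := S9Aux.two_ne_zero'' hodd
  have hfY : ∀ (i : F) (g h : Heis F), h * g⁻¹ ∈ Yset ε i ↔ f h * (f g)⁻¹ ∈ Yset ε i :=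
    fun i g h => hf (Yset ε i)
      (Set.mem_insert_of_mem _ (Set.mem_insert_of_mem _ ⟨i, rfl⟩)) g h
  have hfZ : ∀ g h : Heis F, h * g⁻¹ ∈ Zset F \ {1} ↔ f h * (f g)⁻¹ ∈ Zset F \ {1} :=
    fun g h => hf _ (Set.mem_insert_of_mem _ (Set.mem_insert _ _)) g h
  have excol : ∀ p q r : F, ¬(p = 0 ∧ q = 0) → ∃ k, r = gam ε k p q := by
    intro p q r h
    have hN := S9Aux.N_ne_zero hε h
    refine ⟨(r - p * q / 2) / (p ^ 2 - ε * q ^ 2), ?_⟩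
    unfold gam
    rw [mul_comm (p ^ 2 - ε * q ^ 2) _, div_mul_cancel₀ _ hN]
    ring
  have clear : ∀ p q r k : F, r = gam ε k p q →
      2 * r = p * q + 2 * (p ^ 2 - ε * q ^ 2) * k := by
    intro p q r k h
    have half : p * q / 2 * 2 = p * q := div_mul_cancel₀ _ h2
    unfold gam at h
    linear_combination 2 * h + half
  have key : ∀ (a b c : F) (x : Heis F), f (gElt a b c) = gElt a b c →
      ¬(x.x - a = 0 ∧ x.y - b = 0) →
      ∃ k, 2 * (x.z - c + a * b - x.x * b)
            = (x.x - a) * (x.y - b)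
              + 2 * ((x.x - a) ^ 2 - ε * (x.y - b) ^ 2) * k ∧
        2 * ((f x).z - c + a * b - (f x).x * b)
            = ((f x).x - a) * ((f x).y - b)
              + 2 * (((f x).x - a) ^ 2 - ε * ((f x).y - b) ^ 2) * k := by
    intro a b c x hg hp
    obtain ⟨k, hk⟩ := excol (x.x - a) (x.y - b) (x.z - c + a * b - x.x * b) hp
    have hmem : x * (gElt a b c)⁻¹ ∈ Yset ε k := by
      rw [S9Aux.div_comp, S9Aux.mem_Yset_iff]
      constructor
      · simpa [S9Aux.gx, S9Aux.gy] using hp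
      · simpa [S9Aux.gx, S9Aux.gy, S9Aux.gz] using hk
    have hmem2 := (hfY k (gElt a b c) x).mp hmem
    rw [hg, S9Aux.div_comp, S9Aux.mem_Yset_iff] at hmem2
    have hk2 : (f x).z - c + a * b - (f x).x * b
        = gam ε k ((f x).x - a) ((f x).y - b) := by
      simpa [S9Aux.gx, S9Aux.gy, S9Aux.gz] using hmem2.2
    exact ⟨k, clear _ _ _ _ hk, clear _ _ _ _ hk2⟩
  -- f fixes the center pointwise
  have hZfix : ∀ z : F, f (gElt 0 0 z) = gElt 0 0 z := by
    intro z
    by_cases hz : z = 0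
    · rw [hz, ← S9Aux.one_def, h1]
    · have hm : gElt 0 0 z * (1 : Heis F)⁻¹ ∈ Zset F \ {1} := by
        rw [inv_one, mul_one, S9Aux.mem_Zdiff_iff]
        exact ⟨⟨rfl, rfl⟩, hz⟩
      have hm2 := (hfZ 1 (gElt 0 0 z)).mp hm
      rw [h1, inv_one, mul_one, S9Aux.mem_Zdiff_iff] at hm2
      obtain ⟨⟨hx0, hy0'⟩, -⟩ := hm2
      have hp : ¬((gElt 0 0 z : Heis F).x - 1 = 0 ∧ (gElt 0 0 z : Heis F).y - 0 = 0) := by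
        intro h
        have := h.1
        rw [S9Aux.gx] at this
        simpa using this
      obtain ⟨k, hk1, hk3⟩ := key 1 0 0 (gElt 0 0 z) hy0 hp
      rw [hx0, hy0'] at hk3
      simp only [S9Aux.gx, S9Aux.gy, S9Aux.gz] at hk1
      refine Heis.ext hx0 hy0' ?_
      show (f (gElt 0 0 z)).z = z
      have := mul_left_cancel₀ h2 (hk3.trans hk1.symm)
      linear_combination this
  -- f fixes the coset y₀Z pointwise
  have hY0fix : ∀ w : F, f (gElt 1 0 w) = gElt 1 0 w := by
    intro w
    by_cases hw : w = 0
    · rw [hw]; exact hy0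
    · have hm : gElt 1 0 w * (gElt 1 0 0 : Heis F)⁻¹ ∈ Zset F \ {1} := by
        rw [S9Aux.div_comp, S9Aux.mem_Zdiff_iff]
        refine ⟨⟨?_, ?_⟩, ?_⟩
        · simp [S9Aux.gx]
        · simp [S9Aux.gy]
        · simpa [S9Aux.gx, S9Aux.gy, S9Aux.gz] using hw
      have hm2 := (hfZ (gElt 1 0 0) (gElt 1 0 w)).mp hm
      rw [hy0, S9Aux.div_comp, S9Aux.mem_Zdiff_iff] at hm2
      obtain ⟨⟨hx1, hy1⟩, -⟩ := hm2
      simp only [S9Aux.gx, S9Aux.gy] at hx1 hy1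
      have hx1' : (f (gElt 1 0 w)).x = 1 := by linear_combination hx1
      have hy1' : (f (gElt 1 0 w)).y = 0 := by linear_combination hy1
      have hp : ¬((gElt 1 0 w : Heis F).x - 0 = 0 ∧ (gElt 1 0 w : Heis F).y - 0 = 0) := by
        intro h
        have := h.1
        rw [S9Aux.gx] at this
        simpa using this
      obtain ⟨k, hk1, hk3⟩ := key 0 0 0 (gElt 1 0 w) (by rw [← S9Aux.one_def]; exact h1) hp
      rw [hx1', hy1'] at hk3
      simp only [S9Aux.gx, S9Aux.gy, S9Aux.gz] at hk1
      refine Heis.ext hx1' hy1' ?_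
      show (f (gElt 1 0 w)).z = w
      have := mul_left_cancel₀ h2 (hk3.trans hk1.symm)
      linear_combination this
  -- main case
  intro x
  by_cases hzc : x.x = 0 ∧ x.y = 0
  · have hx : x = gElt 0 0 x.z := Heis.ext hzc.1 hzc.2 rfl
    rw [hx]; exact hZfix x.z
  by_cases hyc : x.x = 1 ∧ x.y = 0
  · have hx : x = gElt 1 0 x.z := Heis.ext hyc.1 hyc.2 rfl
    rw [hx]; exact hY0fix x.z
  have hp0 : ¬(x.x - 0 = 0 ∧ x.y - 0 = 0) := by
    intro h
    exact hzc ⟨by linear_combination h.1, by linear_combination h.2⟩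
  have hp1 : ¬(x.x - 1 = 0 ∧ x.y - 0 = 0) := by
    intro h
    exact hyc ⟨by linear_combination h.1, by linear_combination h.2⟩
  obtain ⟨k0, a1, a2⟩ := key 0 0 0 x (by rw [← S9Aux.one_def]; exact h1) hp0
  obtain ⟨k1, b1, b2⟩ := key 0 0 1 x (hZfix 1) hp0
  obtain ⟨l0, c1, c2⟩ := key 1 0 0 x hy0 hp1
  obtain ⟨l1, d1, d2⟩ := key 1 0 1 x (hY0fix 1) hp1
  have hk : (x.x ^ 2 - ε * x.y ^ 2) * (2 * (k0 - k1)) = 2 := by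
    linear_combination b1 - a1
  have hk' : ((f x).x ^ 2 - ε * (f x).y ^ 2) * (2 * (k0 - k1)) = 2 := by
    linear_combination b2 - a2
  have hkne : 2 * (k0 - k1) ≠ 0 := by
    intro h
    rw [h, mul_zero] at hk
    exact h2 hk.symm
  have hNN : (f x).x ^ 2 - ε * (f x).y ^ 2 = x.x ^ 2 - ε * x.y ^ 2 :=
    mul_right_cancel₀ hkne (hk'.trans hk.symm)
  have hl : ((x.x - 1) ^ 2 - ε * x.y ^ 2) * (2 * (l0 - l1)) = 2 := by
    linear_combination d1 - c1
  have hl' : (((f x).x - 1) ^ 2 - ε * (f x).y ^ 2) * (2 * (l0 - l1)) = 2 := by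
    linear_combination d2 - c2
  have hlne : 2 * (l0 - l1) ≠ 0 := by
    intro h
    rw [h, mul_zero] at hl
    exact h2 hl.symm
  have hMM : ((f x).x - 1) ^ 2 - ε * (f x).y ^ 2 = (x.x - 1) ^ 2 - ε * x.y ^ 2 :=
    mul_right_cancel₀ hlne (hl'.trans hl.symm)
  have hE1 : 2 * (f x).z - (f x).x * (f x).y = 2 * x.z - x.x * x.y := by
    linear_combination a2 - a1 + 2 * k0 * hNN
  have hE3 : 2 * (f x).z - ((f x).x - 1) * (f x).y = 2 * x.z - (x.x - 1) * x.y := by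
    linear_combination c2 - c1 + 2 * l0 * hMM
  have hu2 : 2 * (f x).x = 2 * x.x := by linear_combination hNN - hMM
  have hu : (f x).x = x.x := mul_left_cancel₀ h2 hu2
  have hv : (f x).y = x.y := by linear_combination hE3 - hE1
  have hw2 : 2 * (f x).z = 2 * x.z := by
    linear_combination hE1 + (f x).y * hu + x.x * hv
  have hw : (f x).z = x.z := mul_left_cancel₀ h2 hw2
  exact Heis.ext hu hv hw
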